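/- Let (g_i) be the standard basis of ℝ^{n-1} and let 𝒢 = { ∑_{k=i}^{j-1} g_k : 1 ≤ i ≤ j-1 ≤ n-1 } be the set of 'consecutive sums'. Define ‖·‖_♮ to be the norm whose unit ball is the convex hull of { ±θ : θ ∈ 𝒢 } (the smallest balanced convex body containing 𝒢). Then ‖θ‖_♮ ≥ ‖θ‖_♭ for all θ ∈ ℝ^{n-1}, and ‖θ‖_♮ = ‖θ‖_♭ = 1 for every θ ∈ 𝒢. -/

import Mathlib

/-- The flat norm `‖x‖_♭` on `ℝ^m`. -/
noncomputable def flatNorm {m : ℕ} (x : Fin m → ℝ) : ℝ :=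
  (⨆ i, max (x i) 0) + ⨆ i, max (-x i) 0

/-- The set `𝒢` of consecutive sums `∑_{k=i}^{j} g_k` of standard basis
vectors of `ℝ^m`. -/
def consecSums (m : ℕ) : Set (Fin m → ℝ) :=
  {θ | ∃ i j : Fin m, i ≤ j ∧ θ = fun l => if i ≤ l ∧ l ≤ j then (1 : ℝ) else 0}

/-- The natural norm `‖·‖_♮`: the gauge of the convex hull of `𝒢 ∪ (-𝒢)`. -/
noncomputable def natNorm {m : ℕ} (x : Fin m → ℝ) : ℝ :=
  gauge (convexHull ℝ (consecSums m ∪ -consecSums m)) x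

/-!
`‖·‖_♭` is a seminorm which equals `1` on `𝒢`, hence `≤ 1` on `-𝒢` and, by convexity, on the
unit ball `convexHull (𝒢 ∪ -𝒢)` of `‖·‖_♮`; a seminorm bounded by `1` on an absorbent set is
bounded by the gauge of that set. The unit ball is absorbent because it is a symmetric convex
set spanning `ℝ^m`: it has an interior point `x` (finite dimension), so `-x` is one too,
and so is their midpoint `0`. Finally
`‖θ‖_♮ ≤ 1 = ‖θ‖_♭ ≤ ‖θ‖_♮` for `θ ∈ 𝒢`.
-/

open Set Pointwise

theorem Seminorm.le_gauge_of_subset_closedBall {E : Type*} [AddCommGroup E] [Module ℝ E]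
    {s : Set E} (p : Seminorm ℝ E) (hs : Absorbent ℝ s) (hsp : s ⊆ p.closedBall 0 1) (x : E) :
    p x ≤ gauge s x :=
  le_csInf hs.gauge_set_nonempty fun r ⟨hr, y, hy, hyx⟩ => by
    rw [← hyx, map_smul_eq_mul, Real.norm_of_nonneg hr.le]
    exact mul_le_of_le_one_right hr.le (p.mem_closedBall_zero.1 (hsp hy))

theorem absorbent_convexHull_union_neg {E : Type*} [NormedAddCommGroup E] [NormedSpace ℝ E]
    [FiniteDimensional ℝ E] {s : Set E} (hne : s.Nonempty) (hs : Submodule.span ℝ s = ⊤) :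
    Absorbent ℝ (convexHull ℝ (s ∪ -s)) := by
  set S := convexHull ℝ (s ∪ -s)
  have hconv : Convex ℝ S := convex_convexHull ℝ _
  have hneg : -S = S := by
    rw [← convexHull_neg, union_neg, neg_neg, union_comm]
  have hzero : (0 : E) ∈ S := by
    obtain ⟨v, hv⟩ := hne
    rw [← midpoint_self_neg ℝ v]
    exact hconv.midpoint_mem (subset_convexHull ℝ _ (Or.inl hv))
      (subset_convexHull ℝ _ (Or.inr (neg_mem_neg.2 hv)))
  have hspan : affineSpan ℝ S = ⊤ := by
    refine top_unique ((affineSpan_singleton_union_vadd_eq_top_of_span_eq_top (s := s) (0 : E)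
      (by rwa [Subtype.range_coe])).symm.le.trans (affineSpan_mono ℝ ?_))
    rintro _ (rfl | ⟨v, hv, rfl⟩)
    · exact hzero
    · simpa only [vadd_eq_add, add_zero] using subset_convexHull ℝ (s ∪ -s) (Or.inl hv)
  obtain ⟨x, hx⟩ := hconv.interior_nonempty_iff_affineSpan_eq_top.2 hspan
  have hnx : -x ∈ interior S := by
    rw [← hneg]
    exact preimage_interior_subset_interior_preimage continuous_neg (by simpa using hx)
  refine absorbent_nhds_zero (mem_interior_iff_mem_nhds.1 ?_)
  rw [← midpoint_self_neg ℝ x]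
  exact hconv.interior.midpoint_mem hx hnx

section SupPosPart

variable {ι : Type*} (x y : ι → ℝ)

theorem iSup_max_zero_nonneg : 0 ≤ ⨆ i, max (x i) 0 :=
  Real.iSup_nonneg fun _ => le_max_right _ _

variable [Finite ι]

theorem le_iSup_max_zero (i : ι) : max (x i) 0 ≤ ⨆ j, max (x j) 0 :=
  le_ciSup (f := fun j => max (x j) 0) (finite_range _).bddAbove i

theorem iSup_max_zero_add_le :
    ⨆ i, max (x i + y i) 0 ≤ (⨆ i, max (x i) 0) + ⨆ i, max (y i) 0 :=
  Real.iSup_le (fun i => (max_le (add_le_add (le_max_left _ _) (le_max_left _ _))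
      (add_nonneg (le_max_right _ _) (le_max_right _ _))).trans
        (add_le_add (le_iSup_max_zero x i) (le_iSup_max_zero y i)))
    (add_nonneg (iSup_max_zero_nonneg x) (iSup_max_zero_nonneg y))

end SupPosPart

theorem iSup_max_zero_mul {ι : Type*} {r : ℝ} (hr : 0 ≤ r) (x : ι → ℝ) :
    ⨆ i, max (r * x i) 0 = r * ⨆ i, max (x i) 0 := by
  rw [Real.mul_iSup_of_nonneg hr]
  simp_rw [mul_max_of_nonneg _ _ hr, mul_zero]

section FlatNorm

variable {m : ℕ}

theorem flatNorm_neg (x : Fin m → ℝ) : flatNorm (-x) = flatNorm x := by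
  simp only [flatNorm, Pi.neg_apply, neg_neg]
  exact add_comm _ _

theorem flatNorm_add_le (x y : Fin m → ℝ) : flatNorm (x + y) ≤ flatNorm x + flatNorm y := by
  have hneg := iSup_max_zero_add_le (fun i => -x i) fun i => -y i
  simp only [flatNorm, Pi.add_apply, neg_add] at hneg ⊢
  linarith [iSup_max_zero_add_le x y]

theorem flatNorm_smul_of_nonneg {r : ℝ} (hr : 0 ≤ r) (x : Fin m → ℝ) :
    flatNorm (r • x) = r * flatNorm x := by
  simp only [flatNorm, Pi.smul_apply, smul_eq_mul, ← mul_neg, mul_add, iSup_max_zero_mul hr]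

theorem flatNorm_smul (r : ℝ) (x : Fin m → ℝ) : flatNorm (r • x) = ‖r‖ * flatNorm x := by
  rcases le_total 0 r with hr | hr
  · rw [Real.norm_of_nonneg hr, flatNorm_smul_of_nonneg hr]
  · rw [Real.norm_of_nonpos hr, ← flatNorm_smul_of_nonneg (neg_nonneg.2 hr), neg_smul,
      flatNorm_neg]

variable (m) in
noncomputable def flatSeminorm : Seminorm ℝ (Fin m → ℝ) :=
  Seminorm.of flatNorm flatNorm_add_le flatNorm_smul

@[simp]
theorem flatSeminorm_apply (x : Fin m → ℝ) : flatSeminorm m x = flatNorm x := rfl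

theorem flatNorm_eq_one_of_nonneg_of_le_one {x : Fin m → ℝ} (h0 : 0 ≤ x) (h1 : x ≤ 1)
    {i : Fin m} (hi : x i = 1) : flatNorm x = 1 := by
  have hpos : ⨆ l, max (x l) 0 = 1 :=
    le_antisymm (Real.iSup_le (fun l => max_le (h1 l) zero_le_one) zero_le_one)
      (hi ▸ (le_max_left _ _).trans (le_iSup_max_zero x i))
  have hneg : ⨆ l, max (-x l) 0 = 0 :=
    le_antisymm (Real.iSup_le (fun l => max_le (neg_nonpos.2 (h0 l)) le_rfl) le_rfl)
      (iSup_max_zero_nonneg _)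
  rw [flatNorm, hpos, hneg, add_zero]

theorem flatNorm_eq_one_of_mem_consecSums {θ : Fin m → ℝ} (hθ : θ ∈ consecSums m) :
    flatNorm θ = 1 := by
  obtain ⟨i, j, hij, rfl⟩ := hθ
  refine flatNorm_eq_one_of_nonneg_of_le_one (i := i) (fun l => ?_) (fun l => ?_) (by simp [hij])
  · show (0 : ℝ) ≤ ite _ _ _
    split_ifs <;> norm_num
  · show ite _ _ _ ≤ (1 : ℝ)
    split_ifs <;> norm_num

theorem single_mem_consecSums (i : Fin m) : Pi.single i 1 ∈ consecSums m :=
  ⟨i, i, le_rfl, funext fun l => by simp [Pi.single_apply, ← le_antisymm_iff, eq_comm]⟩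

theorem span_consecSums : Submodule.span ℝ (consecSums m) = ⊤ :=
  top_unique <| (Pi.basisFun ℝ (Fin m)).span_eq.symm.le.trans <| Submodule.span_mono <| by
    rintro _ ⟨i, rfl⟩
    rw [Pi.basisFun_apply]
    exact single_mem_consecSums i

theorem convexHull_consecSums_subset_closedBall :
    convexHull ℝ (consecSums m ∪ -consecSums m) ⊆ (flatSeminorm m).closedBall 0 1 := by
  refine convexHull_min (union_subset (fun θ hθ => ?_) fun θ hθ => ?_)
    ((flatSeminorm m).convex_closedBall 0 1)
  · simp [flatNorm_eq_one_of_mem_consecSums hθ]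
  · simp [← flatNorm_neg θ, flatNorm_eq_one_of_mem_consecSums hθ]

theorem flatNorm_le_natNorm (x : Fin m → ℝ) : flatNorm x ≤ natNorm x := by
  rcases isEmpty_or_nonempty (Fin m) with hm | ⟨⟨i⟩⟩
  · rw [Subsingleton.elim x 0, ← flatSeminorm_apply, map_zero]
    exact gauge_nonneg _
  · exact (flatSeminorm m).le_gauge_of_subset_closedBall
      (absorbent_convexHull_union_neg ⟨_, single_mem_consecSums i⟩ span_consecSums)
      convexHull_consecSums_subset_closedBall x

theorem natNorm_eq_one_of_mem_consecSums {θ : Fin m → ℝ} (hθ : θ ∈ consecSums m) :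
    natNorm θ = 1 :=
  le_antisymm (gauge_le_one_of_mem (subset_convexHull ℝ _ (Or.inl hθ)))
    ((flatNorm_eq_one_of_mem_consecSums hθ).symm.le.trans (flatNorm_le_natNorm θ))

end FlatNorm

/-- `‖θ‖_♮ ≥ ‖θ‖_♭` for all `θ`, and `‖θ‖_♮ = ‖θ‖_♭ = 1` on consecutive sums. -/
theorem natNorm_ge_flatNorm_and_eq_on_consec (m : ℕ) :
    (∀ θ : Fin m → ℝ, flatNorm θ ≤ natNorm θ) ∧
    (∀ θ ∈ consecSums m, natNorm θ = 1 ∧ flatNorm θ = 1) :=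
  ⟨flatNorm_le_natNorm, fun _ hθ =>
    ⟨natNorm_eq_one_of_mem_consecSums hθ, flatNorm_eq_one_of_mem_consecSums hθ⟩⟩
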